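/- arXiv:2405.10831 — 3 statements merged into one kernel-verified Lean document; each statement's English description precedes it below -/
import Mathlib

section
/- Let x_λ : ℂ → ℝ⁷ be the map defined for λ ∈ S¹ ⊂ ℂ and z ∈ ℂ with r = |z| by x_λ(z) = (1 + r² + 5r⁴/4 + 4r⁶/9 + r⁸/36)^{-1} · ( 1 - r² - 3r⁴/4 + 4r⁶/9 - r⁸/36, -i(z - z̄)(1 + r⁶/9), (z + z̄)(1 + r⁶/9), -i(λ^{-1}z² - λz̄²)(1 - r⁴/12), (λ^{-1}z² + λz̄²)(1 - r⁴/12), -i(r²/2)(λ^{-1}z - λz̄)(1 + 4r²/3), (r²/2)(λ^{-1}z + λz̄)(1 + 4r²/3) ). Then x_λ(z) lies on the unit sphere S⁶ ⊂ ℝ⁷ for all z ∈ ℂ and all λ with |λ| = 1. -/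
open Complex ComplexConjugate

theorem willmore_sphere_in_S6 (z lam : ℂ) (hlam : ‖lam‖ = 1) :
    let r : ℝ := ‖z‖
    let d : ℂ := (1 : ℂ) + r ^ 2 + 5 * r ^ 4 / 4 + 4 * r ^ 6 / 9 + r ^ 8 / 36
    let x : Fin 7 → ℂ := ![
      d⁻¹ * ((1 : ℂ) - r ^ 2 - 3 * r ^ 4 / 4 + 4 * r ^ 6 / 9 - r ^ 8 / 36),
      d⁻¹ * (-I * (z - conj z) * (1 + (r : ℂ) ^ 6 / 9)),
      d⁻¹ * ((z + conj z) * (1 + (r : ℂ) ^ 6 / 9)),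
      d⁻¹ * (-I * (lam⁻¹ * z ^ 2 - lam * (conj z) ^ 2) * (1 - (r : ℂ) ^ 4 / 12)),
      d⁻¹ * ((lam⁻¹ * z ^ 2 + lam * (conj z) ^ 2) * (1 - (r : ℂ) ^ 4 / 12)),
      d⁻¹ * (-I * ((r : ℂ) ^ 2 / 2) * (lam⁻¹ * z - lam * conj z) * (1 + 4 * (r : ℂ) ^ 2 / 3)),
      d⁻¹ * (((r : ℂ) ^ 2 / 2) * (lam⁻¹ * z + lam * conj z) * (1 + 4 * (r : ℂ) ^ 2 / 3))]
    (∀ i, (x i).im = 0) ∧ (∑ i, (x i) ^ 2 = 1) := by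
  intro r d x
  have hlam0 : lam ≠ 0 := by
    intro h; rw [h] at hlam; simp at hlam
  have hinv : lam⁻¹ = conj lam := Complex.inv_eq_conj hlam
  have hl : lam⁻¹ * lam = 1 := inv_mul_cancel₀ hlam0
  have hz : z * conj z = (r : ℂ) ^ 2 := by
    rw [Complex.mul_conj]
    norm_cast
    exact (Complex.sq_norm z).symm
  have hdr : d = ((1 + r ^ 2 + 5 * r ^ 4 / 4 + 4 * r ^ 6 / 9 + r ^ 8 / 36 : ℝ) : ℂ) := by
    show ((1 : ℂ) + (r:ℂ) ^ 2 + 5 * (r:ℂ) ^ 4 / 4 + 4 * (r:ℂ) ^ 6 / 9 + (r:ℂ) ^ 8 / 36) = _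
    push_cast; ring
  have hdpos : (0:ℝ) < 1 + r ^ 2 + 5 * r ^ 4 / 4 + 4 * r ^ 6 / 9 + r ^ 8 / 36 := by
    positivity
  have hd0 : d ≠ 0 := by
    rw [hdr]
    exact_mod_cast hdpos.ne'
  have hdconj : conj d = d := by
    rw [hdr, Complex.conj_ofReal]
  have e0 : x 0 = d⁻¹ * ((1 : ℂ) - (r:ℂ) ^ 2 - 3 * (r:ℂ) ^ 4 / 4 + 4 * (r:ℂ) ^ 6 / 9 - (r:ℂ) ^ 8 / 36) := rfl
  have e1 : x 1 = d⁻¹ * (-I * (z - conj z) * (1 + (r : ℂ) ^ 6 / 9)) := rfl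
  have e2 : x 2 = d⁻¹ * ((z + conj z) * (1 + (r : ℂ) ^ 6 / 9)) := rfl
  have e3 : x 3 = d⁻¹ * (-I * (lam⁻¹ * z ^ 2 - lam * (conj z) ^ 2) * (1 - (r : ℂ) ^ 4 / 12)) := rfl
  have e4 : x 4 = d⁻¹ * ((lam⁻¹ * z ^ 2 + lam * (conj z) ^ 2) * (1 - (r : ℂ) ^ 4 / 12)) := rfl
  have e5 : x 5 = d⁻¹ * (-I * ((r : ℂ) ^ 2 / 2) * (lam⁻¹ * z - lam * conj z) * (1 + 4 * (r : ℂ) ^ 2 / 3)) := rfl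
  have e6 : x 6 = d⁻¹ * (((r : ℂ) ^ 2 / 2) * (lam⁻¹ * z + lam * conj z) * (1 + 4 * (r : ℂ) ^ 2 / 3)) := rfl
  constructor
  · have h0 : conj (x 0) = x 0 := by
      rw [e0]
      simp only [map_mul, map_add, map_sub, map_inv₀, map_div₀, map_neg, map_one, map_pow,
        map_ofNat, Complex.conj_conj, Complex.conj_I, Complex.conj_ofReal, hdconj, hinv]
      try ring
    have h1 : conj (x 1) = x 1 := by
      rw [e1]
      simp only [map_mul, map_add, map_sub, map_inv₀, map_div₀, map_neg, map_one, map_pow,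
        map_ofNat, Complex.conj_conj, Complex.conj_I, Complex.conj_ofReal, hdconj, hinv]
      try ring
    have h2 : conj (x 2) = x 2 := by
      rw [e2]
      simp only [map_mul, map_add, map_sub, map_inv₀, map_div₀, map_neg, map_one, map_pow,
        map_ofNat, Complex.conj_conj, Complex.conj_I, Complex.conj_ofReal, hdconj, hinv]
      try ring
    have h3 : conj (x 3) = x 3 := by
      rw [e3]
      simp only [map_mul, map_add, map_sub, map_inv₀, map_div₀, map_neg, map_one, map_pow,
        map_ofNat, Complex.conj_conj, Complex.conj_I, Complex.conj_ofReal, hdconj, hinv]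
      try ring
    have h4 : conj (x 4) = x 4 := by
      rw [e4]
      simp only [map_mul, map_add, map_sub, map_inv₀, map_div₀, map_neg, map_one, map_pow,
        map_ofNat, Complex.conj_conj, Complex.conj_I, Complex.conj_ofReal, hdconj, hinv]
      try ring
    have h5 : conj (x 5) = x 5 := by
      rw [e5]
      simp only [map_mul, map_add, map_sub, map_inv₀, map_div₀, map_neg, map_one, map_pow,
        map_ofNat, Complex.conj_conj, Complex.conj_I, Complex.conj_ofReal, hdconj, hinv]
      try ring
    have h6 : conj (x 6) = x 6 := by
      rw [e6]
      simp only [map_mul, map_add, map_sub, map_inv₀, map_div₀, map_neg, map_one, map_pow,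
        map_ofNat, Complex.conj_conj, Complex.conj_I, Complex.conj_ofReal, hdconj, hinv]
      try ring
    intro i
    fin_cases i
    · exact Complex.conj_eq_iff_im.mp h0
    · exact Complex.conj_eq_iff_im.mp h1
    · exact Complex.conj_eq_iff_im.mp h2
    · exact Complex.conj_eq_iff_im.mp h3
    · exact Complex.conj_eq_iff_im.mp h4
    · exact Complex.conj_eq_iff_im.mp h5
    · exact Complex.conj_eq_iff_im.mp h6
  · rw [Fin.sum_univ_seven, e0, e1, e2, e3, e4, e5, e6]
    have hmain : (d⁻¹ * ((1 : ℂ) - (r:ℂ) ^ 2 - 3 * (r:ℂ) ^ 4 / 4 + 4 * (r:ℂ) ^ 6 / 9 - (r:ℂ) ^ 8 / 36)) ^ 2 +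
        (d⁻¹ * (-I * (z - conj z) * (1 + (r : ℂ) ^ 6 / 9))) ^ 2 +
        (d⁻¹ * ((z + conj z) * (1 + (r : ℂ) ^ 6 / 9))) ^ 2 +
        (d⁻¹ * (-I * (lam⁻¹ * z ^ 2 - lam * (conj z) ^ 2) * (1 - (r : ℂ) ^ 4 / 12))) ^ 2 +
        (d⁻¹ * ((lam⁻¹ * z ^ 2 + lam * (conj z) ^ 2) * (1 - (r : ℂ) ^ 4 / 12))) ^ 2 +
        (d⁻¹ * (-I * ((r : ℂ) ^ 2 / 2) * (lam⁻¹ * z - lam * conj z) * (1 + 4 * (r : ℂ) ^ 2 / 3))) ^ 2 +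
        (d⁻¹ * (((r : ℂ) ^ 2 / 2) * (lam⁻¹ * z + lam * conj z) * (1 + 4 * (r : ℂ) ^ 2 / 3))) ^ 2 =
        d⁻¹ ^ 2 * (((1 : ℂ) - (r:ℂ) ^ 2 - 3 * (r:ℂ) ^ 4 / 4 + 4 * (r:ℂ) ^ 6 / 9 - (r:ℂ) ^ 8 / 36) ^ 2 +
          4 * (r:ℂ) ^ 2 * (1 + (r:ℂ) ^ 6 / 9) ^ 2 +
          4 * (r:ℂ) ^ 4 * (1 - (r:ℂ) ^ 4 / 12) ^ 2 +
          (r:ℂ) ^ 6 * (1 + 4 * (r:ℂ) ^ 2 / 3) ^ 2) := by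
      have hI : I ^ 2 = -1 := Complex.I_sq
      linear_combination (d⁻¹ ^ 2 * ((4 * (1 + (r:ℂ) ^ 6 / 9) ^ 2) +
          (4 * (1 - (r:ℂ) ^ 4 / 12) ^ 2 * (z * conj z + (r:ℂ) ^ 2)) +
          ((r:ℂ) ^ 4 * (1 + 4 * (r:ℂ) ^ 2 / 3) ^ 2))) * hz +
        (d⁻¹ ^ 2 * ((4 * (1 - (r:ℂ) ^ 4 / 12) ^ 2 * z ^ 2 * (conj z) ^ 2) +
          ((r:ℂ) ^ 4 * (1 + 4 * (r:ℂ) ^ 2 / 3) ^ 2 * z * conj z))) * hl +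
        (d⁻¹ ^ 2 * (((z - conj z) * (1 + (r:ℂ) ^ 6 / 9)) ^ 2 +
          ((lam⁻¹ * z ^ 2 - lam * (conj z) ^ 2) * (1 - (r:ℂ) ^ 4 / 12)) ^ 2 +
          (((r:ℂ) ^ 2 / 2) * (lam⁻¹ * z - lam * conj z) * (1 + 4 * (r:ℂ) ^ 2 / 3)) ^ 2)) * hI
    rw [hmain]
    have hd2 : d ^ 2 ≠ 0 := pow_ne_zero 2 hd0
    rw [inv_pow, inv_mul_eq_one₀ hd2]
    show ((1 : ℂ) + (r:ℂ) ^ 2 + 5 * (r:ℂ) ^ 4 / 4 + 4 * (r:ℂ) ^ 6 / 9 + (r:ℂ) ^ 8 / 36) ^ 2 = _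
    ring
end

section
/- Let y : ℂ \ {poles} → ℝ⁵ be defined by y(z) = ((3r⁴ - 4r² + 3)(1 + r²)²)^{-1} · ( -(3r⁸ - 8r⁶ + 8r⁴ - 8r² + 3), √15 (z + z̄)(1 - r²)(1 + r⁴), -i√15 (z - z̄)(1 - r²)(1 + r⁴), √15 (z⁴ + z̄⁴), i√15 (z⁴ - z̄⁴) ), with r = |z|. Then y(z) lies on the unit sphere S⁴ ⊂ ℝ⁵ for all z ∈ ℂ. -/
open Complex ComplexConjugate

theorem minimal_RP2_in_S4 (z : ℂ) :
    let r : ℝ := ‖z‖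
    let d : ℂ := ((3 : ℂ) * r ^ 4 - 4 * r ^ 2 + 3) * (1 + (r : ℂ) ^ 2) ^ 2
    let y : Fin 5 → ℂ := ![
      d⁻¹ * (-(3 * (r : ℂ) ^ 8 - 8 * r ^ 6 + 8 * r ^ 4 - 8 * r ^ 2 + 3)),
      d⁻¹ * ((Real.sqrt 15 : ℂ) * (z + conj z) * (1 - (r : ℂ) ^ 2) * (1 + (r : ℂ) ^ 4)),
      d⁻¹ * (-I * (Real.sqrt 15 : ℂ) * (z - conj z) * (1 - (r : ℂ) ^ 2) * (1 + (r : ℂ) ^ 4)),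
      d⁻¹ * ((Real.sqrt 15 : ℂ) * (z ^ 4 + (conj z) ^ 4)),
      d⁻¹ * (I * (Real.sqrt 15 : ℂ) * (z ^ 4 - (conj z) ^ 4))]
    (∀ i, (y i).im = 0) ∧ (∑ i, (y i) ^ 2 = 1) := by
  intro r d y
  have hdr : d = ((((3 * r ^ 4 - 4 * r ^ 2 + 3) * (1 + r ^ 2) ^ 2 : ℝ)) : ℂ) := by
    push_cast; ring
  have hd : d ≠ 0 := by
    rw [hdr]
    rw [Complex.ofReal_ne_zero]
    have h1 : 3 * r ^ 4 - 4 * r ^ 2 + 3 > 0 := by nlinarith [sq_nonneg (r ^ 2 - 1), sq_nonneg r]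
    have h2 : (1 + r ^ 2) ^ 2 > 0 := by positivity
    positivity
  have hzw : z * (conj z) = ((r : ℂ)) ^ 2 := by
    rw [Complex.mul_conj, ← Complex.sq_norm]
    push_cast; ring
  have h15 : ((Real.sqrt 15 : ℝ) : ℂ) ^ 2 = 15 := by
    norm_cast
    rw [Real.sq_sqrt] <;> norm_num
  have hI : I ^ 2 = -1 := Complex.I_sq
  have hconjd : conj d = d := by
    rw [hdr, Complex.conj_ofReal]
  constructor
  · rw [Fin.forall_fin_succ, Fin.forall_fin_succ, Fin.forall_fin_succ, Fin.forall_fin_succ,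
      Fin.forall_fin_one]
    simp only [y, Matrix.cons_val_zero, Matrix.cons_val_succ]
    refine ⟨?_, ?_, ?_, ?_, ?_⟩ <;>
    · apply Complex.conj_eq_iff_im.mp
      simp only [map_mul, map_inv₀, map_neg, map_sub, map_add, map_pow, map_one, map_ofNat,
        Complex.conj_ofReal, Complex.conj_I, Complex.conj_conj, hconjd]
      try ring
  · simp only [y, Fin.sum_univ_five, Matrix.cons_val_zero, Matrix.cons_val_one,
      Matrix.head_cons, Matrix.cons_val_two, Matrix.tail_cons, Matrix.cons_val_three,
      Matrix.cons_val_four]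
    field_simp
    set s : ℂ := ((Real.sqrt 15 : ℝ) : ℂ) with hs
    set w : ℂ := conj z with hw
    set C : ℂ := (1 - (r : ℂ) ^ 2) * (1 + (r : ℂ) ^ 4) with hC
    linear_combination
      (s ^ 2 * (z - w) ^ 2 * C ^ 2 + s ^ 2 * (z ^ 4 - w ^ 4) ^ 2) * hI
      + (4 * z * w * C ^ 2 + 4 * z ^ 4 * w ^ 4) * h15
      + (60 * C ^ 2 + 60 * (z ^ 3 * w ^ 3 + z ^ 2 * w ^ 2 * (r : ℂ) ^ 2
          + z * w * (r : ℂ) ^ 4 + (r : ℂ) ^ 6)) * hzw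
end

section
/- The map y of the previous statement (the minimal ℝP² of area 10π in S⁴, at λ = 1) satisfies the symmetry y(-1/z̄) = y(z) for all z ∈ ℂ \ {0}. -/
open Complex ComplexConjugate

noncomputable def minimalRP2 (z : ℂ) : Fin 5 → ℂ :=
  let r : ℝ := ‖z‖
  let d : ℂ := ((3 : ℂ) * r ^ 4 - 4 * r ^ 2 + 3) * (1 + (r : ℂ) ^ 2) ^ 2
  ![d⁻¹ * (-(3 * (r : ℂ) ^ 8 - 8 * r ^ 6 + 8 * r ^ 4 - 8 * r ^ 2 + 3)),
    d⁻¹ * ((Real.sqrt 15 : ℂ) * (z + conj z) * (1 - (r : ℂ) ^ 2) * (1 + (r : ℂ) ^ 4)),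
    d⁻¹ * (-I * (Real.sqrt 15 : ℂ) * (z - conj z) * (1 - (r : ℂ) ^ 2) * (1 + (r : ℂ) ^ 4)),
    d⁻¹ * ((Real.sqrt 15 : ℂ) * (z ^ 4 + (conj z) ^ 4)),
    d⁻¹ * (I * (Real.sqrt 15 : ℂ) * (z ^ 4 - (conj z) ^ 4))]

set_option maxHeartbeats 1000000 in
theorem minimalRP2_symmetry (z : ℂ) (hz : z ≠ 0) :
    minimalRP2 (-1 / conj z) = minimalRP2 z := by
  have hz' : (conj z : ℂ) ≠ 0 := by simpa using hz
  have habs : ‖-1 / conj z‖ = ‖z‖⁻¹ := by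
    simp [map_div₀]
  have h2 : ((‖z‖ : ℂ)) ^ 2 = z * conj z := by
    rw [← Complex.ofReal_pow, Complex.sq_norm, Complex.mul_conj]
  have h4 : ((‖z‖ : ℂ)) ^ 4 = (z * conj z) ^ 2 := by
    rw [← h2]; ring
  have h6 : ((‖z‖ : ℂ)) ^ 6 = (z * conj z) ^ 3 := by
    rw [← h2]; ring
  have h8 : ((‖z‖ : ℂ)) ^ 8 = (z * conj z) ^ 4 := by
    rw [← h2]; ring
  have hApos : (0:ℝ) < 3 * ‖z‖ ^ 4 - 4 * ‖z‖ ^ 2 + 3 := by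
    nlinarith [sq_nonneg (‖z‖ ^ 2 - 1), sq_nonneg ‖z‖]
  have hA : (3 * (z * conj z) ^ 2 - 4 * (z * conj z) + 3 : ℂ) ≠ 0 := by
    intro h
    refine absurd (Complex.ofReal_eq_zero.mp ?_) (ne_of_gt hApos)
    push_cast
    linear_combination h + 3 * h4 - 4 * h2
  have hB : (1 + z * conj z : ℂ) ≠ 0 := by
    intro h
    have h0 : ((1 + ‖z‖^2 : ℝ) : ℂ) = 0 := by
      push_cast; linear_combination h + h2
    have := Complex.ofReal_eq_zero.mp h0
    nlinarith [sq_nonneg ‖z‖]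
  have hzz : z * conj z ≠ 0 := mul_ne_zero hz hz'
  have hkey : ((3:ℂ) * ((z * conj z) ^ 2)⁻¹ - 4 * (z * conj z)⁻¹ + 3) *
      (1 + (z * conj z)⁻¹) ^ 2 =
      ((z * conj z) ^ 4)⁻¹ *
      ((3 * (z * conj z) ^ 2 - 4 * (z * conj z) + 3) * (1 + z * conj z) ^ 2) := by
    field_simp
    ring
  have hcan : ∀ n : ℕ, z ^ n * conj z ^ n * z⁻¹ ^ n * (conj z)⁻¹ ^ n = 1 := by
    intro n
    field_simp
    rw [div_pow, div_pow, one_pow]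
    field_simp
  have hc0 : minimalRP2 (-1 / conj z) (0 : Fin 5) = minimalRP2 z (0 : Fin 5) := by
    simp only [minimalRP2, habs, map_div₀, map_neg, map_one, Complex.conj_conj,
      Matrix.cons_val_zero, Matrix.cons_val_one, Matrix.head_cons, Matrix.cons_val_two,
      Matrix.tail_cons, Matrix.cons_val_three, Matrix.cons_val_four]
    push_cast
    simp only [inv_pow, h2, h4, h6, h8, hkey]
    rw [mul_inv, inv_inv, mul_comm ((z * conj z) ^ 4), mul_assoc]
    congr 1
    have e1 : (z * conj z) ^ 4 * (z * conj z)⁻¹ = (z * conj z) ^ 3 := by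
      field_simp
    have e2 : (z * conj z) ^ 4 * ((z * conj z) ^ 2)⁻¹ = (z * conj z) ^ 2 := by
      field_simp
    have e3 : (z * conj z) ^ 4 * ((z * conj z) ^ 3)⁻¹ = z * conj z := by
      field_simp
    have e4 : (z * conj z) ^ 4 * ((z * conj z) ^ 4)⁻¹ = 1 :=
      mul_inv_cancel₀ (pow_ne_zero 4 hzz)
    linear_combination (-3 : ℂ) * e4 + 8 * e3 - 8 * e2 + 8 * e1
  have hc1 : minimalRP2 (-1 / conj z) (1 : Fin 5) = minimalRP2 z (1 : Fin 5) := by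
    simp only [minimalRP2, habs, map_div₀, map_neg, map_one, Complex.conj_conj,
      Matrix.cons_val_zero, Matrix.cons_val_one, Matrix.head_cons, Matrix.cons_val_two,
      Matrix.tail_cons, Matrix.cons_val_three, Matrix.cons_val_four]
    push_cast
    simp only [inv_pow, h2, h4, h6, h8, hkey]
    rw [mul_inv, inv_inv, mul_comm ((z * conj z) ^ 4), mul_assoc]
    congr 1
    field_simp [hz, hz']
    ring
  have hc2 : minimalRP2 (-1 / conj z) (2 : Fin 5) = minimalRP2 z (2 : Fin 5) := by
    simp only [minimalRP2, habs, map_div₀, map_neg, map_one, Complex.conj_conj,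
      Matrix.cons_val_zero, Matrix.cons_val_one, Matrix.head_cons, Matrix.cons_val_two,
      Matrix.tail_cons, Matrix.cons_val_three, Matrix.cons_val_four]
    push_cast
    simp only [inv_pow, h2, h4, h6, h8, hkey]
    rw [mul_inv, inv_inv, mul_comm ((z * conj z) ^ 4), mul_assoc]
    congr 1
    field_simp [hz, hz']
    ring
  have hc3 : minimalRP2 (-1 / conj z) (3 : Fin 5) = minimalRP2 z (3 : Fin 5) := by
    simp only [minimalRP2, habs, map_div₀, map_neg, map_one, Complex.conj_conj,
      Matrix.cons_val_zero, Matrix.cons_val_one, Matrix.head_cons, Matrix.cons_val_two,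
      Matrix.tail_cons, Matrix.cons_val_three, Matrix.cons_val_four]
    push_cast
    simp only [inv_pow, h2, h4, h6, h8, hkey]
    rw [mul_inv, inv_inv, mul_comm ((z * conj z) ^ 4), mul_assoc]
    congr 1
    field_simp [hz, hz']
  have hc4 : minimalRP2 (-1 / conj z) (4 : Fin 5) = minimalRP2 z (4 : Fin 5) := by
    simp only [minimalRP2, habs, map_div₀, map_neg, map_one, Complex.conj_conj,
      Matrix.cons_val_zero, Matrix.cons_val_one, Matrix.head_cons, Matrix.cons_val_two,
      Matrix.tail_cons, Matrix.cons_val_three, Matrix.cons_val_four]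
    push_cast
    simp only [inv_pow, h2, h4, h6, h8, hkey]
    rw [mul_inv, inv_inv, mul_comm ((z * conj z) ^ 4), mul_assoc]
    congr 1
    field_simp [hz, hz']
  funext i
  fin_cases i
  exacts [hc0, hc1, hc2, hc3, hc4]
end
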